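/- arXiv:1501.02028 — 2 statements merged into one kernel-verified Lean document; each statement's English description precedes it below -/
import Mathlib

section
/- Let n = 2m ≥ 6 be even, equip Q_n with an inner product ⟨·,·⟩, and let e_1, ..., e_n be an orthonormal basis such that span(e_k, ..., e_n) = span(X_k, ..., X_n) for every k. Define the Ricci operator Ric^𝔫 of the metric nilpotent Lie algebra (Q_n, ⟨·,·⟩) by ⟨Ric^𝔫 X, Y⟩ = (1/4) Σ_{i,j} ⟨X,[e_i,e_j]⟩⟨Y,[e_i,e_j]⟩ − (1/2) Σ_{i,j} ⟨[X,e_i],e_j⟩⟨[Y,e_i],e_j⟩. Then for every k with m+1 ≤ k ≤ n, the partial trace Σ_{l=k}^{n} ⟨Ric^𝔫 e_l, e_l⟩ is nonnegative. -/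
noncomputable section

open scoped BigOperators RealInnerProductSpace

/-- `e 1, …, e n` is a basis of `V` over `K`. -/
def IsBasisSeq (K : Type*) [Field K] (n : ℕ) {V : Type*} [AddCommGroup V] [Module K V]
    (e : ℕ → V) : Prop :=
  ∃ b : Module.Basis (Fin n) K V, ∀ i : Fin n, e ((i : ℕ) + 1) = b i

/-- `e 1, …, e n` is a basis of `V` realizing the structure relations of the filiform
Lie algebra `Q_n`. -/
def IsQnBasis (K : Type*) [Field K] (n : ℕ) {V : Type*} [LieRing V] [Module K V]
    (e : ℕ → V) : Prop :=
  IsBasisSeq K n e ∧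
  (∀ i, 2 ≤ i → i ≤ n - 2 → ⁅e 1, e i⁆ = e (i + 1)) ∧
  (∀ j, 2 ≤ j → j ≤ n - 1 → ⁅e j, e (n - j + 1)⁆ = ((-1 : K) ^ (j + 1)) • e n) ∧
  (∀ i j, 1 ≤ i → i < j → j ≤ n → ¬(i = 1 ∧ j ≤ n - 2) → ¬(i + j = n + 1 ∧ 2 ≤ i) →
    ⁅e i, e j⁆ = 0)

/-- `e 1, …, e n` is a basis of `V` realizing the structure relations of the filiform
Lie algebra `L_n`. -/
def IsLnBasis (K : Type*) [Field K] (n : ℕ) {V : Type*} [LieRing V] [Module K V]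
    (e : ℕ → V) : Prop :=
  IsBasisSeq K n e ∧
  (∀ i, 2 ≤ i → i ≤ n - 1 → ⁅e 1, e i⁆ = e (i + 1)) ∧
  (∀ i j, 1 ≤ i → i < j → j ≤ n → ¬(i = 1 ∧ j ≤ n - 1) → ⁅e i, e j⁆ = 0)

/-- `nr` is the nilradical (the maximal nilpotent ideal) of the Lie algebra `g`. -/
def IsNilradical (g : Type*) [LieRing g] [LieAlgebra ℝ g] (nr : LieIdeal ℝ g) : Prop :=
  LieRing.IsNilpotent nr ∧ ∀ I : LieIdeal ℝ g, LieRing.IsNilpotent I → I ≤ nr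

/-- The Lie algebra `g` admits an inner product of negative Ricci curvature: there is a
positive definite symmetric bilinear form, an orthonormal basis `E`, and a mean curvature
vector `H` (defined by `⟨H, Z⟩ = Tr ad_Z`) such that the Ricci form
`ric(X) = −⟨[H,X],X⟩ − ½ B(X,X) − ½ Σ_i ‖[X,E_i]‖² + ¼ Σ_{i,j} ⟨[E_i,E_j],X⟩²`
is negative on every nonzero `X`. -/
def HasNegRicci (g : Type*) [LieRing g] [LieAlgebra ℝ g] : Prop :=
  ∃ ip : g →ₗ[ℝ] g →ₗ[ℝ] ℝ,
    (∀ x y, ip x y = ip y x) ∧ (∀ x, x ≠ 0 → 0 < ip x x) ∧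
    ∃ (N : ℕ) (E : Module.Basis (Fin N) ℝ g) (H : g),
      (∀ i j, ip (E i) (E j) = if i = j then (1 : ℝ) else 0) ∧
      (∀ Z : g, ip H Z = LinearMap.trace ℝ g (LieAlgebra.ad ℝ g Z)) ∧
      ∀ X : g, X ≠ 0 →
        - ip ⁅H, X⁆ X - (1 / 2) * killingForm ℝ g X X
          - (1 / 2) * ∑ i, ip ⁅X, E i⁆ ⁅X, E i⁆
          + (1 / 4) * ∑ i, ∑ j, (ip ⁅E i, E j⁆ X) ^ 2 < 0

lemma bracket_span_span {V : Type*} [LieRing V] [LieAlgebra ℝ V]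
    {s t : Set V} {p : Submodule ℝ V}
    (h : ∀ x ∈ s, ∀ y ∈ t, ⁅x, y⁆ ∈ p) :
    ∀ x ∈ Submodule.span ℝ s, ∀ y ∈ Submodule.span ℝ t, ⁅x, y⁆ ∈ p := by
  intro x hx
  induction hx using Submodule.span_induction with
  | mem x hxs =>
    intro y hy
    induction hy using Submodule.span_induction with
    | mem y hyt => exact h x hxs y hyt
    | zero => simp
    | add y z _ _ hy hz => rw [lie_add]; exact p.add_mem hy hz
    | smul a y _ hy => rw [lie_smul]; exact p.smul_mem a hy
  | zero => intro y hy; simp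
  | add x z _ _ hx hz => intro y hy; rw [add_lie]; exact p.add_mem (hx y hy) (hz y hy)
  | smul a x _ hx => intro y hy; rw [smul_lie]; exact p.smul_mem a (hx y hy)

lemma qn_brX_mem {m n : ℕ} (hm : 3 ≤ m) (hn : n = 2 * m)
    {V : Type*} [LieRing V] [LieAlgebra ℝ V] (X : ℕ → V)
    (h1 : ∀ i, 2 ≤ i → i ≤ n - 2 → ⁅X 1, X i⁆ = X (i + 1))
    (h2 : ∀ j, 2 ≤ j → j ≤ n - 1 → ⁅X j, X (n - j + 1)⁆ = ((-1 : ℝ) ^ (j + 1)) • X n)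
    (h0 : ∀ i j, 1 ≤ i → i < j → j ≤ n → ¬(i = 1 ∧ j ≤ n - 2) → ¬(i + j = n + 1 ∧ 2 ≤ i) →
      ⁅X i, X j⁆ = 0)
    (a b : ℕ) (ha1 : m + 1 ≤ a) (ha2 : a ≤ n) (hb1 : 1 ≤ b) (hb2 : b ≤ n) :
    ⁅X a, X b⁆ ∈ Submodule.span ℝ (X '' Set.Icc (a + 1) n) := by
  rcases eq_or_ne b a with rfl | hba
  · simp
  rcases eq_or_ne b 1 with rfl | hb1'
  · rcases le_or_gt a (n - 2) with hle | hgt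
    · have h : ⁅X 1, X a⁆ = X (a + 1) := h1 a (by omega) hle
      have hx : ⁅X a, X 1⁆ = -X (a + 1) := by rw [← lie_skew, h]
      rw [hx]
      exact Submodule.neg_mem _ (Submodule.subset_span ⟨a + 1, ⟨le_rfl, by omega⟩, rfl⟩)
    · have h : ⁅X 1, X a⁆ = 0 := h0 1 a le_rfl (by omega) ha2 (by omega) (by omega)
      have hx : ⁅X a, X 1⁆ = 0 := by rw [← lie_skew, h, neg_zero]
      rw [hx]; exact Submodule.zero_mem _
  · rcases eq_or_ne (a + b) (n + 1) with hsum | hsum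
    · have hb' : n - a + 1 = b := by omega
      have h : ⁅X a, X (n - a + 1)⁆ = ((-1 : ℝ) ^ (a + 1)) • X n := h2 a (by omega) (by omega)
      rw [hb'] at h
      rw [h]
      exact Submodule.smul_mem _ _ (Submodule.subset_span ⟨n, ⟨by omega, le_rfl⟩, rfl⟩)
    · rcases lt_or_gt_of_ne hba with hlt | hgt
      · have h : ⁅X b, X a⁆ = 0 := h0 b a hb1 hlt ha2 (by omega) (by omega)
        have hx : ⁅X a, X b⁆ = 0 := by rw [← lie_skew, h, neg_zero]
        rw [hx]; exact Submodule.zero_mem _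
      · have hx : ⁅X a, X b⁆ = 0 := h0 a b (by omega) hgt hb2 (by omega) (by omega)
        rw [hx]; exact Submodule.zero_mem _

lemma qn_brX_zero {m n : ℕ}
    {V : Type*} [LieRing V] [LieAlgebra ℝ V] (X : ℕ → V)
    (h0 : ∀ i j, 1 ≤ i → i < j → j ≤ n → ¬(i = 1 ∧ j ≤ n - 2) → ¬(i + j = n + 1 ∧ 2 ≤ i) →
      ⁅X i, X j⁆ = 0)
    (hn : n = 2 * m)
    (a b : ℕ) (ha1 : m + 1 ≤ a) (ha2 : a ≤ n) (hb1 : m + 1 ≤ b) (hb2 : b ≤ n) :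
    ⁅X a, X b⁆ = 0 := by
  rcases lt_trichotomy a b with h | rfl | h
  · exact h0 a b (by omega) h hb2 (by omega) (by omega)
  · simp
  · have hx : ⁅X b, X a⁆ = 0 := h0 b a (by omega) h ha2 (by omega) (by omega)
    rw [← lie_skew, hx, neg_zero]

/-- The key estimate in the proof of the necessity part of **Proposition 1**: with `Q_n`
(`n = 2m ≥ 6`) equipped with an inner product `ip` and an orthonormal basis `e 1, …, e n`
with `span(e_k, …, e_n) = span(X_k, …, X_n)` for all `k`, the Ricci operator `Ric^𝔫`
defined by `⟨Ric^𝔫 x, y⟩ = ¼ Σ_{i,j} ⟨x,[e_i,e_j]⟩⟨y,[e_i,e_j]⟩ −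
½ Σ_{i,j} ⟨[x,e_i],e_j⟩⟨[y,e_i],e_j⟩` satisfies `Σ_{l=k}^{n} ⟨Ric^𝔫 e_l, e_l⟩ ≥ 0` for
every `k` with `m+1 ≤ k ≤ n`. -/
theorem statement18 (m n : ℕ) (hm : 3 ≤ m) (hn : n = 2 * m)
    (V : Type) [LieRing V] [LieAlgebra ℝ V]
    (X : ℕ → V) (hX : IsQnBasis ℝ n X)
    (ip : V →ₗ[ℝ] V →ₗ[ℝ] ℝ)
    (hsymm : ∀ x y, ip x y = ip y x) (hpos : ∀ x, x ≠ 0 → 0 < ip x x)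
    (e : ℕ → V)
    (horth : ∀ i j, 1 ≤ i → i ≤ n → 1 ≤ j → j ≤ n →
      ip (e i) (e j) = if i = j then (1 : ℝ) else 0)
    (hspan : ∀ k, 1 ≤ k → k ≤ n →
      Submodule.span ℝ (e '' Set.Icc k n) = Submodule.span ℝ (X '' Set.Icc k n))
    (Ric : V →ₗ[ℝ] V)
    (hRic : ∀ x y : V, ip (Ric x) y =
      (1 / 4) * ∑ i ∈ Finset.Icc 1 n, ∑ j ∈ Finset.Icc 1 n,
          ip x ⁅e i, e j⁆ * ip y ⁅e i, e j⁆
        - (1 / 2) * ∑ i ∈ Finset.Icc 1 n, ∑ j ∈ Finset.Icc 1 n,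
          ip ⁅x, e i⁆ (e j) * ip ⁅y, e i⁆ (e j)) :
    ∀ k, m + 1 ≤ k → k ≤ n → 0 ≤ ∑ l ∈ Finset.Icc k n, ip (Ric (e l)) (e l) := by
  intro k hk1 hk2
  obtain ⟨⟨b, hb⟩, h1, h2, h0⟩ := hX
  have hk1n : 1 ≤ k := by omega
  -- the X's spanning everything
  have htop : Submodule.span ℝ (X '' Set.Icc 1 n) = ⊤ := by
    rw [eq_top_iff, ← b.span_eq]
    apply Submodule.span_mono
    rintro _ ⟨i, rfl⟩
    have hi := i.isLt
    exact ⟨(i : ℕ) + 1, ⟨by omega, by omega⟩, hb i⟩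
  have hemem : ∀ l, k ≤ l → l ≤ n → e l ∈ Submodule.span ℝ (X '' Set.Icc k n) := by
    intro l hl1 hl2
    rw [← hspan k hk1n hk2]
    exact Submodule.subset_span ⟨l, ⟨hl1, hl2⟩, rfl⟩
  -- F2: brackets among the tail vanish
  have hf2 : ∀ a c, k ≤ a → a ≤ n → k ≤ c → c ≤ n → ⁅e a, e c⁆ = 0 := by
    intro a c ha1 ha2 hc1 hc2
    have hmem := bracket_span_span (s := X '' Set.Icc k n) (t := X '' Set.Icc k n)
      (p := (⊥ : Submodule ℝ V))
      (by
        rintro _ ⟨a', ⟨ha1', ha2'⟩, rfl⟩ _ ⟨b', ⟨hb1', hb2'⟩, rfl⟩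
        rw [Submodule.mem_bot]
        exact qn_brX_zero X h0 hn a' b' (by omega) ha2' (by omega) hb2')
      _ (hemem a ha1 ha2) _ (hemem c hc1 hc2)
    simpa using hmem
  -- membership of brackets of the tail with anything
  have hbrmem : ∀ l i, k ≤ l → l ≤ n →
      ⁅e l, e i⁆ ∈ Submodule.span ℝ (X '' Set.Icc (k + 1) n) := by
    intro l i hl1 hl2
    have hei : e i ∈ Submodule.span ℝ (X '' Set.Icc 1 n) := by rw [htop]; trivial
    refine bracket_span_span ?_ _ (hemem l hl1 hl2) _ hei
    rintro _ ⟨a', ⟨ha1', ha2'⟩, rfl⟩ _ ⟨b', ⟨hb1', hb2'⟩, rfl⟩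
    have hmem := qn_brX_mem hm hn X h1 h2 h0 a' b' (by omega) ha2' hb1' hb2'
    exact Submodule.span_mono (Set.image_mono (Set.Icc_subset_Icc_left (by omega))) hmem
  -- F1
  have hf1 : ∀ l i j, k ≤ l → l ≤ n → 1 ≤ j → j ≤ k → ip ⁅e l, e i⁆ (e j) = 0 := by
    intro l i j hl1 hl2 hj1 hjk
    have hmem := hbrmem l i hl1 hl2
    rw [hsymm]
    rcases eq_or_lt_of_le hk2 with rfl | hkn
    · rw [Set.Icc_eq_empty (by omega), Set.image_empty, Submodule.span_empty,
        Submodule.mem_bot] at hmem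
      rw [hmem]; simp
    · rw [← hspan (k + 1) (by omega) (by omega)] at hmem
      have hker : Submodule.span ℝ (e '' Set.Icc (k + 1) n) ≤ LinearMap.ker (ip (e j)) := by
        rw [Submodule.span_le]
        rintro _ ⟨r, ⟨hr1, hr2⟩, rfl⟩
        simp only [SetLike.mem_coe, LinearMap.mem_ker]
        rw [horth j r (by omega) (by omega) (by omega) hr2]
        exact if_neg (by omega)
      exact LinearMap.mem_ker.mp (hker hmem)
  -- the two big sums
  set P := ∑ l ∈ Finset.Icc k n, ∑ i ∈ Finset.Icc 1 n, ∑ j ∈ Finset.Icc 1 n,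
      ip (e l) ⁅e i, e j⁆ * ip (e l) ⁅e i, e j⁆ with hP
  set N := ∑ l ∈ Finset.Icc k n, ∑ i ∈ Finset.Icc 1 n, ∑ j ∈ Finset.Icc 1 n,
      ip ⁅e l, e i⁆ (e j) * ip ⁅e l, e i⁆ (e j) with hN
  have hrw : ∑ l ∈ Finset.Icc k n, ip (Ric (e l)) (e l) = (1 / 4) * P - (1 / 2) * N := by
    have h := Finset.sum_congr rfl fun l (_ : l ∈ Finset.Icc k n) => hRic (e l) (e l)
    rw [h, Finset.sum_sub_distrib, ← Finset.mul_sum, ← Finset.mul_sum, hP, hN]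
  -- rewrite N with j restricted and pulled out
  have hNeq : N = ∑ j ∈ Finset.Icc (k + 1) n, ∑ l ∈ Finset.Icc k n, ∑ i ∈ Finset.Icc 1 n,
      ip (e j) ⁅e l, e i⁆ * ip (e j) ⁅e l, e i⁆ := by
    rw [hN]
    calc ∑ l ∈ Finset.Icc k n, ∑ i ∈ Finset.Icc 1 n, ∑ j ∈ Finset.Icc 1 n,
        ip ⁅e l, e i⁆ (e j) * ip ⁅e l, e i⁆ (e j)
        = ∑ l ∈ Finset.Icc k n, ∑ i ∈ Finset.Icc 1 n, ∑ j ∈ Finset.Icc (k + 1) n,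
            ip (e j) ⁅e l, e i⁆ * ip (e j) ⁅e l, e i⁆ := by
          refine Finset.sum_congr rfl fun l hl => Finset.sum_congr rfl fun i hi => ?_
          simp only [Finset.mem_Icc] at hl hi
          rw [show (∑ j ∈ Finset.Icc 1 n, ip ⁅e l, e i⁆ (e j) * ip ⁅e l, e i⁆ (e j))
              = ∑ j ∈ Finset.Icc 1 n, ip (e j) ⁅e l, e i⁆ * ip (e j) ⁅e l, e i⁆ from
            Finset.sum_congr rfl fun j _ => by rw [hsymm]]
          symm
          apply Finset.sum_subset
          · intro x hx
            simp only [Finset.mem_Icc] at *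
            omega
          · intro j hj hj'
            simp only [Finset.mem_Icc] at hj hj'
            rw [← hsymm, hf1 l i j hl.1 hl.2 hj.1 (by omega)]
            ring
      _ = ∑ l ∈ Finset.Icc k n, ∑ j ∈ Finset.Icc (k + 1) n, ∑ i ∈ Finset.Icc 1 n,
            ip (e j) ⁅e l, e i⁆ * ip (e j) ⁅e l, e i⁆ :=
          Finset.sum_congr rfl fun l _ => Finset.sum_comm
      _ = ∑ j ∈ Finset.Icc (k + 1) n, ∑ l ∈ Finset.Icc k n, ∑ i ∈ Finset.Icc 1 n,
            ip (e j) ⁅e l, e i⁆ * ip (e j) ⁅e l, e i⁆ := Finset.sum_comm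
  -- the per-j estimate
  have hj_ineq : ∀ j ∈ Finset.Icc (k + 1) n,
      2 * (∑ l ∈ Finset.Icc k n, ∑ i ∈ Finset.Icc 1 n,
            ip (e j) ⁅e l, e i⁆ * ip (e j) ⁅e l, e i⁆)
      ≤ ∑ a ∈ Finset.Icc 1 n, ∑ c ∈ Finset.Icc 1 n,
            ip (e j) ⁅e a, e c⁆ * ip (e j) ⁅e a, e c⁆ := by
    intro j hj
    have hsub : (∑ l ∈ Finset.Icc k n, ∑ i ∈ Finset.Icc 1 n,
          ip (e j) ⁅e l, e i⁆ * ip (e j) ⁅e l, e i⁆)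
        ≤ ∑ l ∈ Finset.Icc 1 (k - 1), ∑ i ∈ Finset.Icc 1 n,
          ip (e j) ⁅e l, e i⁆ * ip (e j) ⁅e l, e i⁆ := by
      calc (∑ l ∈ Finset.Icc k n, ∑ i ∈ Finset.Icc 1 n,
            ip (e j) ⁅e l, e i⁆ * ip (e j) ⁅e l, e i⁆)
          = ∑ l ∈ Finset.Icc k n, ∑ i ∈ Finset.Icc 1 (k - 1),
            ip (e j) ⁅e l, e i⁆ * ip (e j) ⁅e l, e i⁆ := by
            refine Finset.sum_congr rfl fun l hl => ?_
            simp only [Finset.mem_Icc] at hl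
            symm
            apply Finset.sum_subset
            · intro x hx
              simp only [Finset.mem_Icc] at *
              omega
            · intro i hi hi'
              simp only [Finset.mem_Icc] at hi hi'
              rw [hf2 l i hl.1 hl.2 (by omega) hi.2]
              simp
        _ = ∑ l ∈ Finset.Icc k n, ∑ i ∈ Finset.Icc 1 (k - 1),
            ip (e j) ⁅e i, e l⁆ * ip (e j) ⁅e i, e l⁆ := by
            refine Finset.sum_congr rfl fun l _ => Finset.sum_congr rfl fun i _ => ?_
            rw [show ⁅e l, e i⁆ = -⁅e i, e l⁆ from (lie_skew _ _).symm, map_neg, neg_mul_neg]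
        _ = ∑ i ∈ Finset.Icc 1 (k - 1), ∑ l ∈ Finset.Icc k n,
            ip (e j) ⁅e i, e l⁆ * ip (e j) ⁅e i, e l⁆ := Finset.sum_comm
        _ ≤ ∑ i ∈ Finset.Icc 1 (k - 1), ∑ l ∈ Finset.Icc 1 n,
            ip (e j) ⁅e i, e l⁆ * ip (e j) ⁅e i, e l⁆ := by
            refine Finset.sum_le_sum fun i _ => ?_
            apply Finset.sum_le_sum_of_subset_of_nonneg
            · intro x hx
              simp only [Finset.mem_Icc] at *
              omega
            · exact fun x _ _ => mul_self_nonneg _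
    have hsplit : (∑ a ∈ Finset.Icc 1 n, ∑ c ∈ Finset.Icc 1 n,
          ip (e j) ⁅e a, e c⁆ * ip (e j) ⁅e a, e c⁆)
        = (∑ a ∈ Finset.Icc 1 (k - 1), ∑ c ∈ Finset.Icc 1 n,
            ip (e j) ⁅e a, e c⁆ * ip (e j) ⁅e a, e c⁆)
          + ∑ a ∈ Finset.Icc k n, ∑ c ∈ Finset.Icc 1 n,
            ip (e j) ⁅e a, e c⁆ * ip (e j) ⁅e a, e c⁆ := by
      rw [show Finset.Icc 1 n = Finset.Icc 1 (k - 1) ∪ Finset.Icc k n from by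
            ext x; simp only [Finset.mem_Icc, Finset.mem_union]; omega]
      rw [Finset.sum_union (by
        rw [Finset.disjoint_left]
        intro x hx hx'
        simp only [Finset.mem_Icc] at hx hx'
        omega)]
    rw [two_mul, hsplit]
    exact add_le_add hsub le_rfl
  -- put everything together
  have key : 2 * N ≤ P := by
    calc 2 * N = ∑ j ∈ Finset.Icc (k + 1) n, 2 * (∑ l ∈ Finset.Icc k n, ∑ i ∈ Finset.Icc 1 n,
          ip (e j) ⁅e l, e i⁆ * ip (e j) ⁅e l, e i⁆) := by rw [hNeq, Finset.mul_sum]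
      _ ≤ ∑ j ∈ Finset.Icc (k + 1) n, ∑ a ∈ Finset.Icc 1 n, ∑ c ∈ Finset.Icc 1 n,
          ip (e j) ⁅e a, e c⁆ * ip (e j) ⁅e a, e c⁆ := Finset.sum_le_sum hj_ineq
      _ ≤ ∑ j ∈ Finset.Icc k n, ∑ a ∈ Finset.Icc 1 n, ∑ c ∈ Finset.Icc 1 n,
          ip (e j) ⁅e a, e c⁆ * ip (e j) ⁅e a, e c⁆ := by
          apply Finset.sum_le_sum_of_subset_of_nonneg
          · intro x hx
            simp only [Finset.mem_Icc] at *
            omega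
          · intro x _ _
            exact Finset.sum_nonneg fun a _ => Finset.sum_nonneg fun c _ => mul_self_nonneg _
      _ = P := by rw [hP]
  rw [hrw]
  linarith
end
end

section
/- Let n = 2m ≥ 6 be even and let D_1, D_2, D_3 be derivations of the real Lie algebra Q_n. Then there exists (c_1, c_2, c_3) ∈ ℝ³ with (c_1, c_2, c_3) ≠ (0,0,0) such that the derivation c_1 D_1 + c_2 D_2 + c_3 D_3 is a nilpotent linear operator on Q_n. -/
noncomputable section

open scoped BigOperators RealInnerProductSpace

namespace QnAux

/-- Rank of a basis index in the triangularizing order `e2, e1, e3, e4, …, en`. -/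
def rk (j : ℕ) : ℕ := if j = 2 then 0 else if j = 1 then 1 else j - 1

/-- The flag of submodules spanned by basis vectors of rank at least `k`. -/
def Mk {V : Type} [AddCommGroup V] [Module ℝ V] (n : ℕ) (e : ℕ → V) (k : ℕ) :
    Submodule ℝ V :=
  Submodule.span ℝ {v | ∃ j, 1 ≤ j ∧ j ≤ n ∧ k ≤ rk j ∧ v = e j}

variable {V : Type} [AddCommGroup V] [Module ℝ V] {n : ℕ} {e : ℕ → V}

theorem mem_Mk {j k : ℕ} (h1 : 1 ≤ j) (h2 : j ≤ n) (h3 : k ≤ rk j) :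
    e j ∈ Mk n e k :=
  Submodule.subset_span ⟨j, h1, h2, h3, rfl⟩

theorem Mk_antitone {k l : ℕ} (h : k ≤ l) : Mk n e l ≤ Mk n e k :=
  Submodule.span_mono (fun _ ⟨j, a1, a2, a3, a4⟩ => ⟨j, a1, a2, le_trans h a3, a4⟩)

theorem Mk_bot (hn : 2 ≤ n) : Mk n e n = ⊥ := by
  have : {v | ∃ j, 1 ≤ j ∧ j ≤ n ∧ n ≤ rk j ∧ v = e j} = (∅ : Set V) := by
    ext v
    simp only [Set.mem_setOf_eq, Set.mem_empty_iff_false, iff_false, not_exists]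
    intro j hj
    obtain ⟨h1, h2, h3, -⟩ := hj
    unfold rk at h3
    split_ifs at h3 <;> omega
  rw [Mk, this, Submodule.span_empty]

theorem sum_lie' {L : Type*} [LieRing L] {ι : Type*} (s : Finset ι) (f : ι → L) (y : L) :
    ⁅∑ i ∈ s, f i, y⁆ = ∑ i ∈ s, ⁅f i, y⁆ := by
  induction s using Finset.cons_induction with
  | empty => simp
  | cons a s ha ih => rw [Finset.sum_cons, Finset.sum_cons, add_lie, ih]

theorem Mk_induction {k : ℕ} {p : V → Prop}
    (hgen : ∀ j, 1 ≤ j → j ≤ n → k ≤ rk j → p (e j))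
    (h0 : p 0) (hadd : ∀ x y, p x → p y → p (x + y))
    (hsmul : ∀ (a : ℝ) x, p x → p (a • x)) :
    ∀ x ∈ Mk n e k, p x := by
  intro x hx
  refine Submodule.span_induction (p := fun x _ => p x) ?_ h0
    (fun x y _ _ => hadd x y) (fun a x _ => hsmul a x) hx
  rintro v ⟨j, hj1, hjn, hrk, rfl⟩
  exact hgen j hj1 hjn hrk




theorem key_nilpotent {V : Type} [LieRing V] [LieAlgebra ℝ V] (n : ℕ) (hn6 : 6 ≤ n)
    (e : ℕ → V) (b : Module.Basis (Fin n) ℝ V) (hb : ∀ i : Fin n, e ((i : ℕ) + 1) = b i)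
    (h1 : ∀ i, 2 ≤ i → i ≤ n - 2 → ⁅e 1, e i⁆ = e (i + 1))
    (h2 : ∀ j, 2 ≤ j → j ≤ n - 1 → ⁅e j, e (n - j + 1)⁆ = ((-1 : ℝ) ^ (j + 1)) • e n)
    (h0 : ∀ i j, 1 ≤ i → i < j → j ≤ n → ¬(i = 1 ∧ j ≤ n - 2) → ¬(i + j = n + 1 ∧ 2 ≤ i) →
      ⁅e i, e j⁆ = 0)
    (D : V →ₗ[ℝ] V)
    (hD : ∀ x y : V, D ⁅x, y⁆ = ⁅D x, y⁆ + ⁅x, D y⁆)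
    (ha : b.repr (D (e 1)) ⟨0, by omega⟩ = 0)
    (hc : b.repr (D (e 2)) ⟨1, by omega⟩ = 0) :
    IsNilpotent (D : Module.End ℝ V) := by
  -- identify e with the basis
  have heb : ∀ j, 1 ≤ j → ∀ hj : j ≤ n, e j = b ⟨j - 1, by omega⟩ := by
    intro j hj1 hj2
    have h := hb ⟨j - 1, by omega⟩
    simp only at h
    rw [show j - 1 + 1 = j by omega] at h
    exact h
  -- general vanishing of brackets
  have hz : ∀ i j, 1 ≤ i → i ≤ n → 1 ≤ j → j ≤ n →
      ¬(i = 1 ∧ 2 ≤ j ∧ j ≤ n - 2) → ¬(j = 1 ∧ 2 ≤ i ∧ i ≤ n - 2) →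
      ¬(i + j = n + 1 ∧ 2 ≤ i ∧ 2 ≤ j) → ⁅e i, e j⁆ = 0 := by
    intro i j hi1 hi2 hj1 hj2 ex1 ex2 ex3
    rcases lt_trichotomy i j with h | h | h
    · exact h0 i j hi1 h hj2 (by omega) (by omega)
    · rw [h]; exact lie_self _
    · rw [← lie_skew, h0 j i hj1 h hi2 (by omega) (by omega), neg_zero]
  -- the e_n-producing brackets
  have hbn : ∀ i j, 2 ≤ i → i ≤ n - 1 → i + j = n + 1 →
      ⁅e i, e j⁆ = ((-1 : ℝ) ^ (i + 1)) • e n := by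
    intro i j hi1 hi2 hij
    have h' : n - i + 1 = j := by omega
    have h := h2 i hi1 hi2
    rwa [h'] at h
  -- membership from vanishing coordinates
  have hmem : ∀ (x : V) (k : ℕ),
      (∀ j, 1 ≤ j → ∀ hj : j ≤ n, rk j < k → b.repr x ⟨j - 1, by omega⟩ = 0) →
      x ∈ Mk n e k := by
    intro x k hcoef
    rw [← b.sum_repr x]
    refine Submodule.sum_mem _ fun i _ => ?_
    have hilt : (i : ℕ) < n := i.isLt
    by_cases hk : k ≤ rk ((i : ℕ) + 1)
    · refine Submodule.smul_mem _ _ ?_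
      rw [← hb i]
      exact mem_Mk (by omega) (by omega) hk
    · have hzero : b.repr x i = 0 := by
        have h := hcoef ((i : ℕ) + 1) (by omega) (by omega) (by omega)
        have hieq : (⟨(i : ℕ) + 1 - 1, by omega⟩ : Fin n) = i := Fin.ext (by simp)
        rwa [hieq] at h
      rw [hzero, zero_smul]
      exact Submodule.zero_mem _
  -- coordinates of basis vectors
  have hcoord0 : ∀ j, 1 ≤ j → j ≤ n → ∀ i : Fin n, (i : ℕ) ≠ j - 1 → b.repr (e j) i = 0 := by
    intro j hj1 hj2 i hne
    rw [heb j hj1 hj2, b.repr_self]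
    exact Finsupp.single_eq_of_ne fun h => hne (congrArg Fin.val h)
  have hcoordn : b.repr (e n) ⟨n - 1, by omega⟩ = 1 := by
    rw [heb n (by omega) le_rfl, b.repr_self]
    exact Finsupp.single_eq_same
  -- the e_n coordinate of ⁅e 1, x⁆ always vanishes
  have hsnd : ∀ x : V, b.repr ⁅e 1, x⁆ ⟨n - 1, by omega⟩ = 0 := by
    intro x
    have hfun : (b.coord ⟨n - 1, by omega⟩).comp ((LieAlgebra.ad ℝ V) (e 1)) = 0 := by
      apply b.ext
      intro i
      have hilt : (i : ℕ) < n := i.isLt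
      simp only [LinearMap.comp_apply, LieAlgebra.ad_apply, LinearMap.zero_apply,
        Module.Basis.coord_apply]
      rw [← hb i]
      rcases eq_or_ne ((i : ℕ) + 1) 1 with h' | h'
      · rw [h', lie_self]
        simp
      · by_cases hcase : (i : ℕ) + 1 ≤ n - 2
        · rw [h1 ((i : ℕ) + 1) (by omega) hcase]
          exact hcoord0 ((i : ℕ) + 1 + 1) (by omega) (by omega) _ (by show n - 1 ≠ ((i : ℕ) + 1 + 1) - 1; omega)
        · rw [hz 1 ((i : ℕ) + 1) (by omega) (by omega) (by omega) (by omega)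
            (by omega) (by omega) (by omega)]
          simp
    have h := LinearMap.congr_fun hfun x
    simpa [Module.Basis.coord_apply] using h
  -- the (2,1) entry of D vanishes
  have ha2 : b.repr (D (e 1)) ⟨1, by omega⟩ = 0 := by
    have hzero1 : ⁅e 1, e (n - 1)⁆ = 0 :=
      hz 1 (n - 1) (by omega) (by omega) (by omega) (by omega) (by omega) (by omega) (by omega)
    have hexp : (0 : V) = ⁅D (e 1), e (n - 1)⁆ + ⁅e 1, D (e (n - 1))⁆ := by
      rw [← hD (e 1) (e (n - 1)), hzero1, map_zero]
    have h2n : ⁅e 2, e (n - 1)⁆ = -(e n) := by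
      rw [hbn 2 (n - 1) le_rfl (by omega) (by omega)]
      norm_num
    have hfst : ⁅D (e 1), e (n - 1)⁆
        = (b.repr (D (e 1)) ⟨1, by omega⟩) • ⁅e 2, e (n - 1)⁆ := by
      conv_lhs => rw [← b.sum_repr (D (e 1))]
      rw [sum_lie']
      rw [Finset.sum_eq_single (⟨1, by omega⟩ : Fin n)]
      · rw [smul_lie]
        congr 1
        rw [← hb ⟨1, by omega⟩]
      · intro i _ hne
        have hilt : (i : ℕ) < n := i.isLt
        have hne' : (i : ℕ) ≠ 1 := fun h => hne (Fin.ext h)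
        rw [smul_lie, ← hb i]
        rcases eq_or_ne ((i : ℕ) + 1) (n - 1) with h' | h'
        · rw [h', lie_self, smul_zero]
        · rw [hz ((i : ℕ) + 1) (n - 1) (by omega) (by omega) (by omega) (by omega)
            (by omega) (by omega) (by omega), smul_zero]
      · intro hnotmem
        exact absurd (Finset.mem_univ _) hnotmem
    rw [hfst, h2n] at hexp
    have hcn := congrArg (fun v => b.repr v ⟨n - 1, by omega⟩) hexp
    simp only [map_zero, map_add, map_smul, map_neg, Finsupp.coe_zero, Pi.zero_apply,
      Finsupp.add_apply, Finsupp.smul_apply, Finsupp.neg_apply, smul_eq_mul,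
      hcoordn, hsnd, mul_one, add_zero] at hcn
    linarith
  -- D (e 1) lands in the span of e_3, …, e_n
  have hDe1 : D (e 1) ∈ Mk n e 2 := by
    refine hmem _ 2 ?_
    intro j hj1 hjn hrk
    unfold rk at hrk
    split_ifs at hrk with hj2 hj1'
    · subst hj2; exact ha2
    · subst hj1'; exact ha
    · exact absurd hrk (by omega)
  -- D (e 2) misses e 2
  have hDe2 : D (e 2) ∈ Mk n e 1 := by
    refine hmem _ 1 ?_
    intro j hj1 hjn hrk
    unfold rk at hrk
    split_ifs at hrk with hj2 hj1'
    · subst hj2; exact hc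
    · exact absurd hrk (by omega)
    · exact absurd hrk (by omega)
  -- brackets with e 1 on the left
  have hbr1 : ∀ j, 1 ≤ j → j ≤ n → j ≠ 2 → ⁅e 1, e j⁆ ∈ Mk n e j := by
    intro j hj1 hjn hj2
    by_cases hcase : 2 ≤ j ∧ j ≤ n - 2
    · rw [h1 j hcase.1 hcase.2]
      refine mem_Mk (by omega) (by omega) ?_
      unfold rk; split_ifs <;> omega
    · rcases eq_or_ne j 1 with rfl | hj1'
      · rw [lie_self]; exact Submodule.zero_mem _
      · rw [hz 1 j (by omega) (by omega) (by omega) (by omega) (by omega) (by omega) (by omega)]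
        exact Submodule.zero_mem _
  have hspan1 : ∀ k, 1 ≤ k → ∀ x ∈ Mk n e k, ⁅e 1, x⁆ ∈ Mk n e (max 3 (k + 1)) := by
    intro k hk
    refine Mk_induction ?_ ?_ ?_ ?_
    · intro j hj1 hjn hrk
      have hj2 : j ≠ 2 := by unfold rk at hrk; split_ifs at hrk <;> omega
      rcases eq_or_ne j 1 with rfl | hj1'
      · rw [lie_self]; exact Submodule.zero_mem _
      · refine Mk_antitone ?_ (hbr1 j hj1 hjn hj2)
        unfold rk at hrk; split_ifs at hrk <;> omega
    · rw [lie_zero]; exact Submodule.zero_mem _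
    · intro x y hx hy; rw [lie_add]; exact add_mem hx hy
    · intro a x hx; rw [lie_smul]; exact Submodule.smul_mem _ _ hx
  -- brackets of high generators against a low e i
  have hbrL0 : ∀ i, 2 ≤ i → i ≤ n - 2 → ∀ j, 3 ≤ j → j ≤ n →
      ⁅e j, e i⁆ ∈ Mk n e (n - 1) := by
    intro i hi2 hin j hj3 hjn
    by_cases hcase : j + i = n + 1
    · rw [hbn j i (by omega) (by omega) (by omega)]
      refine Submodule.smul_mem _ _ (mem_Mk (by omega) le_rfl ?_)
      unfold rk; split_ifs <;> omega
    · rw [hz j i (by omega) (by omega) (by omega) (by omega) (by omega) (by omega) (by omega)]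
      exact Submodule.zero_mem _
  have hbrL : ∀ i, 2 ≤ i → i ≤ n - 2 → ∀ x ∈ Mk n e 2, ⁅x, e i⁆ ∈ Mk n e (n - 1) := by
    intro i hi2 hin
    refine Mk_induction ?_ ?_ ?_ ?_
    · intro j hj1 hjn hrk
      have hj3 : 3 ≤ j := by unfold rk at hrk; split_ifs at hrk <;> omega
      exact hbrL0 i hi2 hin j hj3 hjn
    · rw [zero_lie]; exact Submodule.zero_mem _
    · intro x y hx hy; rw [add_lie]; exact add_mem hx hy
    · intro a x hx; rw [smul_lie]; exact Submodule.smul_mem _ _ hx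
  -- the main induction
  have hDei : ∀ i, 3 ≤ i → i ≤ n - 1 → D (e i) ∈ Mk n e i := by
    intro i hi3
    induction i, hi3 using Nat.le_induction with
    | base =>
      intro _
      rw [show (3 : ℕ) = 2 + 1 by rfl, ← h1 2 le_rfl (by omega), hD]
      refine add_mem ?_ ?_
      · exact Mk_antitone (by omega) (hbrL 2 le_rfl (by omega) _ hDe1)
      · exact Mk_antitone (by omega) (hspan1 1 le_rfl _ hDe2)
    | succ i hi ih =>
      intro hin
      rw [← h1 i (by omega) (by omega), hD]
      refine add_mem ?_ ?_
      · exact Mk_antitone (by omega) (hbrL i (by omega) (by omega) _ hDe1)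
      · exact Mk_antitone (by omega) (hspan1 i (by omega) _ (ih (by omega)))
  -- D kills e n
  have hzn1 : ∀ j, 1 ≤ j → j ≤ n → j ≠ 2 → ⁅e j, e (n - 1)⁆ = 0 := by
    intro j hj1 hjn hj2
    rcases eq_or_ne j (n - 1) with rfl | hne
    · exact lie_self _
    · exact hz j (n - 1) (by omega) (by omega) (by omega) (by omega) (by omega) (by omega)
        (by omega)
  have hDen : D (e n) = 0 := by
    have hen : ⁅e 2, e (n - 1)⁆ = -(e n) := by
      rw [hbn 2 (n - 1) le_rfl (by omega) (by omega)]
      norm_num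
    have h2nzero : ⁅e 2, e n⁆ = 0 :=
      hz 2 n (by omega) (by omega) (by omega) (by omega) (by omega) (by omega) (by omega)
    have hfst : ⁅D (e 2), e (n - 1)⁆ = 0 := by
      refine Mk_induction (p := fun x => ⁅x, e (n - 1)⁆ = 0) ?_ ?_ ?_ ?_ _ hDe2
      · intro j hj1 hjn hrk
        have hj2 : j ≠ 2 := by unfold rk at hrk; split_ifs at hrk <;> omega
        exact hzn1 j hj1 hjn hj2
      · show ⁅(0 : V), e (n - 1)⁆ = 0
        exact zero_lie _
      · intro x y hx hy
        have hx' : ⁅x, e (n - 1)⁆ = 0 := hx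
        have hy' : ⁅y, e (n - 1)⁆ = 0 := hy
        show ⁅x + y, e (n - 1)⁆ = 0
        rw [add_lie, hx', hy', add_zero]
      · intro a x hx
        have hx' : ⁅x, e (n - 1)⁆ = 0 := hx
        show ⁅a • x, e (n - 1)⁆ = 0
        rw [smul_lie, hx', smul_zero]
    have hsnd' : ⁅e 2, D (e (n - 1))⁆ = 0 := by
      refine Mk_induction (p := fun x => ⁅e 2, x⁆ = 0) ?_ ?_ ?_ ?_ _
        (hDei (n - 1) (by omega) le_rfl)
      · intro j hj1 hjn hrk
        have hjeq : j = n := by unfold rk at hrk; split_ifs at hrk <;> omega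
        rw [hjeq]; exact h2nzero
      · show ⁅e 2, (0 : V)⁆ = 0
        exact lie_zero _
      · intro x y hx hy
        have hx' : ⁅e 2, x⁆ = 0 := hx
        have hy' : ⁅e 2, y⁆ = 0 := hy
        show ⁅e 2, x + y⁆ = 0
        rw [lie_add, hx', hy', add_zero]
      · intro a x hx
        have hx' : ⁅e 2, x⁆ = 0 := hx
        show ⁅e 2, a • x⁆ = 0
        rw [lie_smul, hx', smul_zero]
    have hzero : D ⁅e 2, e (n - 1)⁆ = 0 := by
      rw [hD, hfst, hsnd', add_zero]
    have hen' : e n = -⁅e 2, e (n - 1)⁆ := by rw [hen, neg_neg]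
    rw [hen', map_neg, hzero, neg_zero]
  -- D lowers the flag
  have hstep : ∀ k, ∀ x ∈ Mk n e k, D x ∈ Mk n e (k + 1) := by
    intro k
    refine Mk_induction ?_ ?_ ?_ ?_
    · intro j hj1 hjn hrk
      rcases eq_or_ne j 2 with rfl | hj2
      · refine Mk_antitone ?_ hDe2
        have : k = 0 := by simpa [rk] using hrk
        omega
      rcases eq_or_ne j 1 with rfl | hj1'
      · refine Mk_antitone ?_ hDe1
        have : k ≤ 1 := by simpa [rk] using hrk
        omega
      rcases eq_or_ne j n with rfl | hjn'
      · rw [hDen]; exact Submodule.zero_mem _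
      · refine Mk_antitone ?_ (hDei j (by omega) (by omega))
        unfold rk at hrk; split_ifs at hrk <;> omega
    · rw [map_zero]; exact Submodule.zero_mem _
    · intro x y hx hy; rw [map_add]; exact add_mem hx hy
    · intro a x hx; rw [map_smul]; exact Submodule.smul_mem _ _ hx
  -- everything lies in the top piece
  have htop : ∀ x : V, x ∈ Mk n e 0 := by
    intro x
    refine hmem x 0 ?_
    intro j hj1 hjn hrk
    exact absurd hrk (Nat.not_lt_zero _)
  -- conclude
  refine ⟨n, ?_⟩
  ext x
  have hkey : ∀ k, (D ^ k) x ∈ Mk n e k := by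
    intro k
    induction k with
    | zero => simpa using htop x
    | succ k ih =>
      rw [pow_succ', Module.End.mul_apply]
      exact hstep k _ ih
  have hfin := hkey n
  rw [Mk_bot (by omega)] at hfin
  simpa using hfin

end QnAux

/-- Since the maximal torus of derivations of `Q_n` (`n = 2m ≥ 6`) is two-dimensional, any
three derivations `D₁, D₂, D₃` of `Q_n` admit a nontrivial linear combination
`c₁D₁ + c₂D₂ + c₃D₃` which is a nilpotent operator. -/
theorem statement19 (m n : ℕ) (hm : 3 ≤ m) (hn : n = 2 * m)
    (V : Type) [LieRing V] [LieAlgebra ℝ V]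
    (e : ℕ → V) (he : IsQnBasis ℝ n e)
    (D₁ D₂ D₃ : V →ₗ[ℝ] V)
    (hD₁ : ∀ x y : V, D₁ ⁅x, y⁆ = ⁅D₁ x, y⁆ + ⁅x, D₁ y⁆)
    (hD₂ : ∀ x y : V, D₂ ⁅x, y⁆ = ⁅D₂ x, y⁆ + ⁅x, D₂ y⁆)
    (hD₃ : ∀ x y : V, D₃ ⁅x, y⁆ = ⁅D₃ x, y⁆ + ⁅x, D₃ y⁆) :
    ∃ c₁ c₂ c₃ : ℝ, (c₁, c₂, c₃) ≠ (0, 0, 0) ∧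
      IsNilpotent (c₁ • D₁ + c₂ • D₂ + c₃ • D₃ : Module.End ℝ V) := by
  obtain ⟨⟨b, hb⟩, hq1, hq2, hq0⟩ := he
  have hn6 : 6 ≤ n := by omega
  set Ds : Fin 3 → (V →ₗ[ℝ] V) := ![D₁, D₂, D₃] with hDs
  set v : Fin 3 → Fin 2 → ℝ := fun k =>
    ![b.repr ((Ds k) (e 1)) ⟨0, by omega⟩, b.repr ((Ds k) (e 2)) ⟨1, by omega⟩] with hv
  have hdep : ¬ LinearIndependent ℝ v := by
    intro hli
    have hcard := hli.fintype_card_le_finrank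
    rw [Module.finrank_fintype_fun_eq_card] at hcard
    simp [Fintype.card_fin] at hcard
  obtain ⟨g, hsum, i0, hg⟩ := Fintype.not_linearIndependent_iff.mp hdep
  refine ⟨g 0, g 1, g 2, ?_, ?_⟩
  · intro hcontra
    rw [Prod.ext_iff, Prod.ext_iff] at hcontra
    simp only at hcontra
    fin_cases i0 <;> simp_all
  · set Dc : V →ₗ[ℝ] V := g 0 • D₁ + g 1 • D₂ + g 2 • D₃ with hDc
    have hder : ∀ x y : V, Dc ⁅x, y⁆ = ⁅Dc x, y⁆ + ⁅x, Dc y⁆ := by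
      intro x y
      simp only [hDc, LinearMap.add_apply, LinearMap.smul_apply, hD₁ x y, hD₂ x y, hD₃ x y,
        smul_add, add_lie, lie_add, lie_smul, smul_lie]
      abel
    have hcoords : ∀ j : Fin 2, g 0 * v 0 j + g 1 * v 1 j + g 2 * v 2 j = 0 := by
      intro j
      have hs := congrFun hsum j
      simp only [Finset.sum_apply, Pi.smul_apply, smul_eq_mul, Pi.zero_apply,
        Fin.sum_univ_three] at hs
      exact hs
    have hc1 : b.repr (Dc (e 1)) ⟨0, by omega⟩ = 0 := by
      have hcj := hcoords 0
      simp only [hv, hDs, Matrix.cons_val_zero, Matrix.cons_val_one, Matrix.head_cons,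
        Matrix.cons_val_two, Matrix.tail_cons] at hcj
      simp only [hDc, LinearMap.add_apply, LinearMap.smul_apply, map_add, map_smul,
        Finsupp.add_apply, Finsupp.smul_apply, smul_eq_mul]
      linarith
    have hc2 : b.repr (Dc (e 2)) ⟨1, by omega⟩ = 0 := by
      have hcj := hcoords 1
      simp only [hv, hDs, Matrix.cons_val_zero, Matrix.cons_val_one, Matrix.head_cons,
        Matrix.cons_val_two, Matrix.tail_cons] at hcj
      simp only [hDc, LinearMap.add_apply, LinearMap.smul_apply, map_add, map_smul,
        Finsupp.add_apply, Finsupp.smul_apply, smul_eq_mul]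
      linarith
    exact QnAux.key_nilpotent n hn6 e b hb hq1 hq2 hq0 Dc hder hc1 hc2
end
end
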